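/- arXiv:2407.15684 — 5 statements merged into one kernel-verified Lean document; each statement's English description precedes it below -/
import Mathlib

section
/- Let K, T ⊆ ℝ^d be unconditional convex sets. Then γ_d(K+T) · γ_d(K ∩ T) ≥ γ_d(K) · γ_d(T). -/
/-!
Induction on the dimension, slicing along the first coordinate. For an unconditional convex
`S ⊆ ℝ^{d+1}` the slices `S_t = {x | (t, x) ∈ S}` are unconditional and convex, and they shrink as
`|t|` grows; so `f_S(u) = γ_d(S_u)` is antitone in `u ≥ 0`, and `γ_{d+1}(S) = ∫ f_S dν` with `ν`
the law of `|g|`, `g ~ N(0, 1)`. Since `K_s + T_t ⊆ (K + T)_{s+t} ⊆ (K + T)_{max s t}` and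
`K_s ∩ T_t ⊆ (K ∩ T)_{min s t}`, the induction hypothesis gives
`f_K(s) f_T(t) ≤ f_{K+T}(max s t) f_{K∩T}(min s t)`, and the Ahlswede–Daykin four functions
theorem on the chain `[0, ∞)` integrates this to the claim. On a chain that theorem follows by
symmetrizing `∫∫ f₁(s) f₂(t)` in `(s, t)` and comparing the integrands pointwise.

`K + T` need not be Borel, but convex sets are null-measurable (their boundary is Lebesgue-null),
which is all that Fubini needs.
-/

open scoped Pointwise
open MeasureTheory ProbabilityTheory

/-- The standard Gaussian probability measure on `ℝ^d`. -/
noncomputable def stdGaussianPi (d : ℕ) : Measure (Fin d → ℝ) :=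
  Measure.pi fun _ => gaussianReal 0 1

/-- A set `K ⊆ ℝ^d` is unconditional if it is invariant under all coordinate sign flips. -/
def Unconditional (d : ℕ) (K : Set (Fin d → ℝ)) : Prop :=
  ∀ x ∈ K, ∀ ε : Fin d → ℝ, (∀ i, ε i = 1 ∨ ε i = -1) → (fun i => ε i * x i) ∈ K

open scoped ENNReal NNReal
open Set

namespace ENNReal

theorem add_le_add_of_le_of_mul_le_mul {x y p q : ℝ≥0∞} (hx : x ≤ p) (hy : y ≤ p)
    (hxy : x * y ≤ p * q) : x + y ≤ p + q := by
  rcases eq_or_ne p ⊤ with rfl | hp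
  · simp
  rcases eq_or_ne q ⊤ with rfl | hq
  · simp
  lift p to ℝ≥0 using hp
  lift q to ℝ≥0 using hq
  lift x to ℝ≥0 using ne_top_of_le_ne_top coe_ne_top hx
  lift y to ℝ≥0 using ne_top_of_le_ne_top coe_ne_top hy
  norm_cast at *
  rw [← NNReal.coe_le_coe] at *
  push_cast at *
  rcases p.coe_nonneg.eq_or_lt with hp0 | hp0
  · linarith [x.coe_nonneg, y.coe_nonneg, q.coe_nonneg]
  · -- `p (x + y) ≤ p² + x y ≤ p² + p q`, the first step being `(p - x) (p - y) ≥ 0`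
    nlinarith [mul_nonneg (sub_nonneg.2 hx) (sub_nonneg.2 hy)]

theorem mul_add_mul_le_of_four_functions {a₀ a₁ b₀ b₁ c₀ c₁ d₀ d₁ : ℝ≥0∞}
    (h₀₀ : a₀ * b₀ ≤ c₀ * d₀) (h₁₀ : a₁ * b₀ ≤ c₁ * d₀) (h₀₁ : a₀ * b₁ ≤ c₁ * d₀)
    (h₁₁ : a₁ * b₁ ≤ c₁ * d₁) : a₀ * b₁ + a₁ * b₀ ≤ c₁ * d₀ + c₀ * d₁ := by
  refine add_le_add_of_le_of_mul_le_mul h₀₁ h₁₀ ?_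
  calc a₀ * b₁ * (a₁ * b₀) = a₀ * b₀ * (a₁ * b₁) := by ring
    _ ≤ c₀ * d₀ * (c₁ * d₁) := mul_le_mul' h₀₀ h₁₁
    _ = c₁ * d₀ * (c₀ * d₁) := by ring

end ENNReal

theorem four_functions_theorem_lintegral {α : Type*} [MeasurableSpace α] [LinearOrder α]
    {μ : Measure α} [SFinite μ] {f₁ f₂ f₃ f₄ : α → ℝ≥0∞} (hf₁ : AEMeasurable f₁ μ)
    (hf₂ : AEMeasurable f₂ μ) (hf₃ : AEMeasurable f₃ μ) (hf₄ : AEMeasurable f₄ μ)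
    (h : ∀ s t, f₁ s * f₂ t ≤ f₃ (s ⊔ t) * f₄ (s ⊓ t)) :
    (∫⁻ x, f₁ x ∂μ) * ∫⁻ x, f₂ x ∂μ ≤ (∫⁻ x, f₃ x ∂μ) * ∫⁻ x, f₄ x ∂μ := by
  have symmetrize : ∀ {u v : α → ℝ≥0∞}, AEMeasurable u μ → AEMeasurable v μ →
      ∫⁻ z, u z.1 * v z.2 + u z.2 * v z.1 ∂μ.prod μ = 2 * ((∫⁻ x, u x ∂μ) * ∫⁻ x, v x ∂μ) := by
    intro u v hu hv
    have huv : AEMeasurable (fun z : α × α => u z.1 * v z.2) (μ.prod μ) :=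
      hu.comp_fst.mul hv.comp_snd
    rw [lintegral_add_left' huv, lintegral_prod_mul hu hv]
    simp_rw [mul_comm (u _) (v _)]
    rw [lintegral_prod_mul hv hu, mul_comm (∫⁻ x, v x ∂μ), two_mul]
  have pointwise : ∀ z : α × α,
      f₁ z.1 * f₂ z.2 + f₁ z.2 * f₂ z.1 ≤ f₃ z.1 * f₄ z.2 + f₃ z.2 * f₄ z.1 := by
    rintro ⟨s, t⟩
    wlog hst : s ≤ t generalizing s t
    · simpa only [add_comm] using this t s (le_of_not_ge hst)
    have hts : f₁ t * f₂ s ≤ f₃ t * f₄ s := by simpa [hst] using h t s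
    have hst' : f₁ s * f₂ t ≤ f₃ t * f₄ s := by simpa [hst] using h s t
    rw [add_comm (f₃ s * _)]
    exact ENNReal.mul_add_mul_le_of_four_functions (by simpa using h s s) hts hst'
      (by simpa using h t t)
  have := lintegral_mono (μ := μ.prod μ) pointwise
  rwa [symmetrize hf₁ hf₂, symmetrize hf₃ hf₄,
    ENNReal.mul_le_mul_iff_right two_ne_zero ENNReal.ofNat_ne_top] at this

theorem MeasureTheory.Measure.prod_apply₀ {α β : Type*} [MeasurableSpace α] [MeasurableSpace β]
    {μ : Measure α} {ν : Measure β} [SFinite ν] {s : Set (α × β)}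
    (hs : NullMeasurableSet s (μ.prod ν)) : μ.prod ν s = ∫⁻ x, ν (Prod.mk x ⁻¹' s) ∂μ := by
  obtain ⟨t, hts, htm, ht⟩ := hs.exists_measurable_subset_ae_eq
  obtain ⟨u, hsu, hum, hu⟩ := hs.exists_measurable_superset_ae_eq
  refine le_antisymm ?_ ?_
  · calc μ.prod ν s = μ.prod ν t := (measure_congr ht).symm
      _ = ∫⁻ x, ν (Prod.mk x ⁻¹' t) ∂μ := prod_apply htm
      _ ≤ ∫⁻ x, ν (Prod.mk x ⁻¹' s) ∂μ := lintegral_mono fun x => measure_mono (preimage_mono hts)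
  · calc ∫⁻ x, ν (Prod.mk x ⁻¹' s) ∂μ ≤ ∫⁻ x, ν (Prod.mk x ⁻¹' u) ∂μ :=
          lintegral_mono fun x => measure_mono (preimage_mono hsu)
      _ = μ.prod ν u := (prod_apply hum).symm
      _ = μ.prod ν s := measure_congr hu

theorem measure_mul_measure_le_of_subsingleton {α : Type*} [Add α] [Subsingleton α]
    [MeasurableSpace α] (μ : Measure α) (K T : Set α) : μ K * μ T ≤ μ (K + T) * μ (K ∩ T) := by
  rcases K.eq_empty_or_nonempty with rfl | hK
  · simp
  rcases T.eq_empty_or_nonempty with rfl | hT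
  · simp
  rw [(hK.add hT).eq_univ, hK.eq_univ, hT.eq_univ, inter_self]

section

variable {d : ℕ}

def slice (S : Set (Fin (d + 1) → ℝ)) (t : ℝ) : Set (Fin d → ℝ) :=
  {x | (Fin.cons t x : Fin (d + 1) → ℝ) ∈ S}

@[simp]
theorem mem_slice {S : Set (Fin (d + 1) → ℝ)} {t : ℝ} {x : Fin d → ℝ} :
    x ∈ slice S t ↔ (Fin.cons t x : Fin (d + 1) → ℝ) ∈ S :=
  Iff.rfl

theorem Convex.fin_cons_mem {S : Set (Fin (d + 1) → ℝ)} (hS : Convex ℝ S) {s t : ℝ}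
    {x y : Fin d → ℝ} (hx : (Fin.cons s x : Fin (d + 1) → ℝ) ∈ S)
    (hy : (Fin.cons t y : Fin (d + 1) → ℝ) ∈ S) {a b : ℝ} (ha : 0 ≤ a) (hb : 0 ≤ b)
    (hab : a + b = 1) : (Fin.cons (a * s + b * t) (a • x + b • y) : Fin (d + 1) → ℝ) ∈ S := by
  convert hS hx hy ha hb hab using 1
  ext i
  cases i using Fin.cases <;> simp

theorem Convex.slice {S : Set (Fin (d + 1) → ℝ)} (hS : Convex ℝ S) (t : ℝ) :
    Convex ℝ (slice S t) := fun x hx y hy a b ha hb hab => by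
  simpa [← add_mul, hab] using hS.fin_cons_mem (mem_slice.1 hx) (mem_slice.1 hy) ha hb hab

theorem Unconditional.fin_cons_mem {S : Set (Fin (d + 1) → ℝ)} (hS : Unconditional (d + 1) S)
    {t : ℝ} {x : Fin d → ℝ} (hx : (Fin.cons t x : Fin (d + 1) → ℝ) ∈ S) {σ : ℝ}
    (hσ : σ = 1 ∨ σ = -1) {ε : Fin d → ℝ} (hε : ∀ i, ε i = 1 ∨ ε i = -1) :
    (Fin.cons (σ * t) (fun i => ε i * x i) : Fin (d + 1) → ℝ) ∈ S := by
  convert hS _ hx (Fin.cons σ ε) (Fin.forall_fin_succ.2 ⟨by simpa, by simpa⟩) using 1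
  ext i
  cases i using Fin.cases <;> simp

theorem Unconditional.slice {S : Set (Fin (d + 1) → ℝ)} (hS : Unconditional (d + 1) S)
    (t : ℝ) : Unconditional d (slice S t) := fun x hx ε hε => by
  simpa using hS.fin_cons_mem (mem_slice.1 hx) (Or.inl rfl) hε

theorem Unconditional.add {K T : Set (Fin d → ℝ)} (hK : Unconditional d K)
    (hT : Unconditional d T) : Unconditional d (K + T) := by
  rintro _ ⟨x, hx, y, hy, rfl⟩ ε hε
  exact ⟨_, hK x hx ε hε, _, hT y hy ε hε, by ext i; simp [mul_add]⟩

theorem Unconditional.inter {K T : Set (Fin d → ℝ)} (hK : Unconditional d K)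
    (hT : Unconditional d T) : Unconditional d (K ∩ T) :=
  fun x hx ε hε => ⟨hK x hx.1 ε hε, hT x hx.2 ε hε⟩

theorem slice_subset_slice_of_abs_le {S : Set (Fin (d + 1) → ℝ)} (hS : Convex ℝ S)
    (hSu : Unconditional (d + 1) S) {s t : ℝ} (hst : |s| ≤ |t|) : slice S t ⊆ slice S s := by
  intro x hx
  rw [mem_slice] at hx
  have hL : Convex ℝ {u : ℝ | (Fin.cons u x : Fin (d + 1) → ℝ) ∈ S} :=
    fun u hu v hv a b ha hb hab => by
      simpa [← add_smul, hab] using hS.fin_cons_mem hu hv ha hb hab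
  have hneg : (Fin.cons (-t) x : Fin (d + 1) → ℝ) ∈ S := by
    simpa using hSu.fin_cons_mem hx (Or.inr rfl) (ε := fun _ => 1) (fun _ => Or.inl rfl)
  have hs : s ∈ uIcc (-t) t := by
    rw [mem_uIcc]
    rcases abs_cases t with ⟨h, -⟩ | ⟨h, -⟩ <;> rw [h, abs_le] at hst
    · exact Or.inl hst
    · exact Or.inr ⟨by linarith, by linarith⟩
  exact hL.ordConnected.uIcc_subset hneg hx hs

theorem slice_subset_slice_of_le {S : Set (Fin (d + 1) → ℝ)} (hS : Convex ℝ S)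
    (hSu : Unconditional (d + 1) S) {u v : ℝ≥0} (huv : u ≤ v) : slice S v ⊆ slice S u :=
  slice_subset_slice_of_abs_le hS hSu (by simpa using huv)

theorem slice_add_slice_subset (K T : Set (Fin (d + 1) → ℝ)) (s t : ℝ) :
    slice K s + slice T t ⊆ slice (K + T) (s + t) := by
  rintro _ ⟨x, hx, y, hy, rfl⟩
  refine ⟨_, hx, _, hy, ?_⟩
  ext i
  cases i using Fin.cases <;> simp

instance (d : ℕ) : IsProbabilityMeasure (stdGaussianPi d) := by
  unfold stdGaussianPi
  infer_instance

theorem measurePreserving_fin_cons_stdGaussianPi (d : ℕ) :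
    MeasurePreserving (MeasurableEquiv.piFinSuccAbove (fun _ : Fin (d + 1) => ℝ) 0).symm
      ((gaussianReal 0 1).prod (stdGaussianPi d)) (stdGaussianPi (d + 1)) :=
  (measurePreserving_piFinSuccAbove (fun _ => gaussianReal 0 1) 0).symm _

theorem stdGaussianPi_absolutelyContinuous : ∀ d, stdGaussianPi d ≪ volume
  | 0 => by rw [stdGaussianPi, volume_pi, Measure.pi_of_empty, Measure.pi_of_empty]
  | d + 1 => by
    rw [← (measurePreserving_fin_cons_stdGaussianPi d).map_eq,
      ← (volume_preserving_piFinSuccAbove (fun _ : Fin (d + 1) => ℝ) 0).symm.map_eq]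
    exact ((gaussianReal_absolutelyContinuous 0 one_ne_zero).prod
      (stdGaussianPi_absolutelyContinuous d)).map (MeasurableEquiv.measurable _)

theorem Convex.nullMeasurableSet_stdGaussianPi {S : Set (Fin d → ℝ)} (hS : Convex ℝ S) :
    NullMeasurableSet S (stdGaussianPi d) :=
  (hS.nullMeasurableSet (μ := volume)).mono_ac (stdGaussianPi_absolutelyContinuous d)

theorem stdGaussianPi_succ_apply {S : Set (Fin (d + 1) → ℝ)}
    (hS : NullMeasurableSet S (stdGaussianPi (d + 1))) :
    stdGaussianPi (d + 1) S = ∫⁻ t, stdGaussianPi d (slice S t) ∂gaussianReal 0 1 := by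
  have e := measurePreserving_fin_cons_stdGaussianPi d
  rw [← e.measure_preimage_equiv, Measure.prod_apply₀ (hS.preimage e.quasiMeasurePreserving)]
  congr! 3 with t
  ext x
  simp [Fin.consEquiv]

theorem antitone_stdGaussianPi_slice {S : Set (Fin (d + 1) → ℝ)} (hS : Convex ℝ S)
    (hSu : Unconditional (d + 1) S) : Antitone fun u : ℝ≥0 => stdGaussianPi d (slice S u) :=
  fun _ _ huv => measure_mono (slice_subset_slice_of_le hS hSu huv)

theorem stdGaussianPi_succ_eq_lintegral_nnnorm {S : Set (Fin (d + 1) → ℝ)} (hS : Convex ℝ S)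
    (hSu : Unconditional (d + 1) S) :
    stdGaussianPi (d + 1) S =
      ∫⁻ u, stdGaussianPi d (slice S u) ∂(gaussianReal 0 1).map fun t => ‖t‖₊ := by
  rw [lintegral_map (antitone_stdGaussianPi_slice hS hSu).measurable measurable_nnnorm,
    stdGaussianPi_succ_apply hS.nullMeasurableSet_stdGaussianPi]
  congr! 3 with t
  rw [coe_nnnorm, Real.norm_eq_abs]
  exact (slice_subset_slice_of_abs_le hS hSu (abs_abs t).le).antisymm
    (slice_subset_slice_of_abs_le hS hSu (abs_abs t).ge)

theorem stdGaussianPi_succ_mul_le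
    (ih : ∀ K T : Set (Fin d → ℝ), Convex ℝ K → Convex ℝ T → Unconditional d K →
      Unconditional d T →
      stdGaussianPi d K * stdGaussianPi d T ≤ stdGaussianPi d (K + T) * stdGaussianPi d (K ∩ T))
    {K T : Set (Fin (d + 1) → ℝ)} (hK : Convex ℝ K) (hT : Convex ℝ T)
    (hKu : Unconditional (d + 1) K) (hTu : Unconditional (d + 1) T) :
    stdGaussianPi (d + 1) K * stdGaussianPi (d + 1) T ≤
      stdGaussianPi (d + 1) (K + T) * stdGaussianPi (d + 1) (K ∩ T) := by
  have hW := hK.add hT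
  have hWu := hKu.add hTu
  rw [stdGaussianPi_succ_eq_lintegral_nnnorm hK hKu,
    stdGaussianPi_succ_eq_lintegral_nnnorm hT hTu, stdGaussianPi_succ_eq_lintegral_nnnorm hW hWu,
    stdGaussianPi_succ_eq_lintegral_nnnorm (hK.inter hT) (hKu.inter hTu)]
  refine four_functions_theorem_lintegral
    (antitone_stdGaussianPi_slice hK hKu).measurable.aemeasurable
    (antitone_stdGaussianPi_slice hT hTu).measurable.aemeasurable
    (antitone_stdGaussianPi_slice hW hWu).measurable.aemeasurable
    (antitone_stdGaussianPi_slice (hK.inter hT) (hKu.inter hTu)).measurable.aemeasurable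
    fun s t => ?_
  have hsum : slice K s + slice T t ⊆ slice (K + T) ↑(s ⊔ t) :=
    (slice_add_slice_subset K T s t).trans <| by
      exact_mod_cast slice_subset_slice_of_le hW hWu (sup_le le_self_add le_add_self)
  have hinter : slice K s ∩ slice T t ⊆ slice (K ∩ T) ↑(s ⊓ t) :=
    inter_subset_inter (slice_subset_slice_of_le hK hKu inf_le_left)
      (slice_subset_slice_of_le hT hTu inf_le_right)
  calc stdGaussianPi d (slice K s) * stdGaussianPi d (slice T t)
      ≤ stdGaussianPi d (slice K s + slice T t) * stdGaussianPi d (slice K s ∩ slice T t) :=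
        ih _ _ (hK.slice s) (hT.slice t) (hKu.slice s) (hTu.slice t)
    _ ≤ _ := mul_le_mul' (measure_mono hsum) (measure_mono hinter)

end

/-- Strong Gaussian correlation inequality for unconditional convex sets:
`γ_d(K+T) · γ_d(K ∩ T) ≥ γ_d(K) · γ_d(T)`. -/
theorem stmt3 (d : ℕ) (K T : Set (Fin d → ℝ)) (hK : Convex ℝ K) (hT : Convex ℝ T)
    (hKu : Unconditional d K) (hTu : Unconditional d T) :
    stdGaussianPi d K * stdGaussianPi d T ≤
      stdGaussianPi d (K + T) * stdGaussianPi d (K ∩ T) := by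
  induction d with
  | zero => exact measure_mul_measure_le_of_subsingleton _ K T
  | succ d ih => exact stdGaussianPi_succ_mul_le ih hK hT hKu hTu
end

section
/- Let μ be a symmetric product probability measure on ℝ^d (each factor symmetric about 0) and let K, T ⊆ ℝ^d be unconditional convex sets. Then μ(K+T) · μ(K ∩ T) ≥ μ(K) · μ(T). -/
open scoped Pointwise ENNReal
open MeasureTheory

/-- Two-point Ahlswede–Daykin style numeric lemma in `ℝ≥0∞`. -/
lemma twoPoint {A B C D : ℝ≥0∞} (hA : A ≤ C) (hB : B ≤ C) (hP : A * B ≤ C * D) :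
    A + B ≤ C + D := by
  rcases eq_or_ne C 0 with hC0 | hC0
  · subst hC0
    simp only [le_zero_iff] at hA hB
    simp [hA, hB]
  rcases eq_or_ne C ⊤ with hCt | hCt
  · simp [hCt]
  rcases eq_or_ne D ⊤ with hDt | hDt
  · simp [hDt]
  have hAt : A ≠ ⊤ := ne_top_of_le_ne_top hCt hA
  have hBt : B ≠ ⊤ := ne_top_of_le_ne_top hCt hB
  have hac : A.toReal ≤ C.toReal := (ENNReal.toReal_le_toReal hAt hCt).mpr hA
  have hbc : B.toReal ≤ C.toReal := (ENNReal.toReal_le_toReal hBt hCt).mpr hB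
  have hab : A.toReal * B.toReal ≤ C.toReal * D.toReal := by
    have := (ENNReal.toReal_le_toReal (ENNReal.mul_ne_top hAt hBt)
      (ENNReal.mul_ne_top hCt hDt)).mpr hP
    simpa [ENNReal.toReal_mul] using this
  have hcpos : 0 < C.toReal := ENNReal.toReal_pos hC0 hCt
  have hdnn : 0 ≤ D.toReal := ENNReal.toReal_nonneg
  have key : A.toReal + B.toReal ≤ C.toReal + D.toReal := by
    nlinarith [mul_nonneg (sub_nonneg.mpr hac) (sub_nonneg.mpr hbc)]
  have hABt : A + B ≠ ⊤ := ENNReal.add_ne_top.mpr ⟨hAt, hBt⟩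
  have hCDt : C + D ≠ ⊤ := ENNReal.add_ne_top.mpr ⟨hCt, hDt⟩
  refine (ENNReal.toReal_le_toReal hABt hCDt).mp ?_
  rw [ENNReal.toReal_add hAt hBt, ENNReal.toReal_add hCt hDt]
  exact key

/-- 1D four-functions lemma. -/
lemma oneDim (ρ : Measure ℝ) [SigmaFinite ρ] (φ ψ γ δ : ℝ → ℝ≥0∞)
    (hφ : Measurable φ) (hψ : Measurable ψ) (hγ : Measurable γ) (hδ : Measurable δ)
    (hevφ : ∀ s, φ s = φ |s|) (hevψ : ∀ s, ψ s = ψ |s|)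
    (hevγ : ∀ s, γ s = γ |s|) (hevδ : ∀ s, δ s = δ |s|)
    (hyp : ∀ s t, φ s * ψ t ≤ γ (max |s| |t|) * δ (min |s| |t|)) :
    (∫⁻ s, φ s ∂ρ) * ∫⁻ s, ψ s ∂ρ ≤ (∫⁻ s, γ s ∂ρ) * ∫⁻ s, δ s ∂ρ := by
  have aux : ∀ s t : ℝ, |t| ≤ |s| →
      φ s * ψ t + φ t * ψ s ≤ γ s * δ t + γ t * δ s := by
    intro s t hts
    have hCst : γ s * δ t = γ (max |s| |t|) * δ (min |s| |t|) := by
      rw [max_eq_left hts, min_eq_right hts, ← hevγ, ← hevδ]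
    have hA : φ s * ψ t ≤ γ s * δ t := by rw [hCst]; exact hyp s t
    have hB : φ t * ψ s ≤ γ s * δ t := by
      rw [hCst, max_comm, min_comm]; exact hyp t s
    have hss : φ s * ψ s ≤ γ s * δ s := by
      have := hyp s s
      simpa [max_self, min_self, ← hevγ, ← hevδ] using this
    have htt : φ t * ψ t ≤ γ t * δ t := by
      have := hyp t t
      simpa [max_self, min_self, ← hevγ, ← hevδ] using this
    have hP : (φ s * ψ t) * (φ t * ψ s) ≤ (γ s * δ t) * (γ t * δ s) := by
      calc (φ s * ψ t) * (φ t * ψ s) = (φ s * ψ s) * (φ t * ψ t) := by ring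
        _ ≤ (γ s * δ s) * (γ t * δ t) := mul_le_mul' hss htt
        _ = (γ s * δ t) * (γ t * δ s) := by ring
    exact twoPoint hA hB hP
  have ptwise : ∀ s t : ℝ,
      φ s * ψ t + φ t * ψ s ≤ γ s * δ t + γ t * δ s := by
    intro s t
    rcases le_total |t| |s| with h | h
    · exact aux s t h
    · have := aux t s h
      calc φ s * ψ t + φ t * ψ s = φ t * ψ s + φ s * ψ t := by ring
        _ ≤ γ t * δ s + γ s * δ t := this
        _ = γ s * δ t + γ t * δ s := by ring
  have hm1 : Measurable fun z : ℝ × ℝ => φ z.1 * ψ z.2 :=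
    (hφ.comp measurable_fst).mul (hψ.comp measurable_snd)
  have e1 : ∫⁻ z : ℝ × ℝ, φ z.1 * ψ z.2 ∂ρ.prod ρ = (∫⁻ s, φ s ∂ρ) * ∫⁻ s, ψ s ∂ρ :=
    lintegral_prod_mul hφ.aemeasurable hψ.aemeasurable
  have e2 : ∫⁻ z : ℝ × ℝ, φ z.2 * ψ z.1 ∂ρ.prod ρ = (∫⁻ s, φ s ∂ρ) * ∫⁻ s, ψ s ∂ρ := by
    have : ∫⁻ z : ℝ × ℝ, ψ z.1 * φ z.2 ∂ρ.prod ρ = (∫⁻ s, ψ s ∂ρ) * ∫⁻ s, φ s ∂ρ :=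
      lintegral_prod_mul hψ.aemeasurable hφ.aemeasurable
    rw [mul_comm, ← this]
    congr 1; ext z; ring
  have e3 : ∫⁻ z : ℝ × ℝ, γ z.1 * δ z.2 ∂ρ.prod ρ = (∫⁻ s, γ s ∂ρ) * ∫⁻ s, δ s ∂ρ :=
    lintegral_prod_mul hγ.aemeasurable hδ.aemeasurable
  have e4 : ∫⁻ z : ℝ × ℝ, γ z.2 * δ z.1 ∂ρ.prod ρ = (∫⁻ s, γ s ∂ρ) * ∫⁻ s, δ s ∂ρ := by
    have : ∫⁻ z : ℝ × ℝ, δ z.1 * γ z.2 ∂ρ.prod ρ = (∫⁻ s, δ s ∂ρ) * ∫⁻ s, γ s ∂ρ :=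
      lintegral_prod_mul hδ.aemeasurable hγ.aemeasurable
    rw [mul_comm, ← this]
    congr 1; ext z; ring
  have hm3 : Measurable fun z : ℝ × ℝ => γ z.1 * δ z.2 :=
    (hγ.comp measurable_fst).mul (hδ.comp measurable_snd)
  have big : ∫⁻ z : ℝ × ℝ, (φ z.1 * ψ z.2 + φ z.2 * ψ z.1) ∂ρ.prod ρ
      ≤ ∫⁻ z : ℝ × ℝ, (γ z.1 * δ z.2 + γ z.2 * δ z.1) ∂ρ.prod ρ :=
    lintegral_mono fun z => ptwise z.1 z.2
  rw [lintegral_add_left hm1, lintegral_add_left hm3, e1, e2, e3, e4,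
    ← two_mul, ← two_mul] at big
  exact (ENNReal.mul_le_mul_iff_right (by norm_num) (by norm_num)).mp big

/-- Outer-measure Fubini upper bound for "first-coordinate solid" sets. -/
lemma lemmaA {α : Type*} [MeasurableSpace α] (ρ : Measure ℝ) (ν : Measure α)
    [IsFiniteMeasure ν]
    (A : Set (ℝ × α)) (hA : ∀ s t x, (s, x) ∈ A → |t| ≤ |s| → (t, x) ∈ A) :
    ρ.prod ν A ≤ ∫⁻ s, ν (Prod.mk s ⁻¹' A) ∂ρ := by
  classical
  set θ : ℝ → Set α := fun u => Prod.mk u ⁻¹' A with hθ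
  have hθeven : ∀ s, θ s = θ |s| := by
    intro s
    ext x
    constructor
    · intro h; exact hA s |s| x h (by rw [abs_abs])
    · intro h; exact hA |s| s x h (by rw [abs_abs])
  have hθmono : ∀ u v : ℝ, 0 ≤ u → u ≤ v → θ v ⊆ θ u := by
    intro u v hu huv x hx
    exact hA v u x hx (by rw [abs_of_nonneg hu, abs_of_nonneg (hu.trans huv)]; exact huv)
  set H : ℝ → Set α := fun u => toMeasurable ν (θ u) with hH
  set L : ℝ → ℝ≥0∞ := fun s => ⨅ (q : ℚ) (_ : 0 ≤ (q : ℝ) ∧ (q : ℝ) < s), ν (θ (q : ℝ))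
    with hL
  set E₀ : Set ℝ := {s | 0 < s ∧ ν (θ s) < L s} with hE₀def
  -- countability of E₀
  have hLfin : ∀ s ∈ E₀, L s ≠ ⊤ := by
    intro s hs
    have : L s ≤ ν (θ ((0 : ℚ) : ℝ)) := iInf₂_le 0 ⟨by norm_num, by exact_mod_cast hs.1⟩
    exact ne_top_of_le_ne_top (measure_ne_top ν _) this
  have hE₀ : E₀.Countable := by
    have hstep : ∀ s : ↥E₀, ∃ q : ℚ, (ν (θ ↑s)).toReal < (q : ℝ) ∧ (q : ℝ) < (L ↑s).toReal := by
      intro ⟨s, hs⟩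
      exact exists_rat_btwn ((ENNReal.toReal_lt_toReal (measure_ne_top ν _)
        (hLfin s hs)).mpr hs.2)
    choose F hF1 hF2 using hstep
    have haux : ∀ a b : ↥E₀, (a : ℝ) < (b : ℝ) → F b < F a := by
      intro a b hab
      have ha0 : (0 : ℝ) < (a : ℝ) := a.2.1
      obtain ⟨q₀, hq₁, hq₂⟩ := exists_rat_btwn hab
      have h1 : L (b : ℝ) ≤ ν (θ (q₀ : ℝ)) :=
        iInf₂_le q₀ ⟨le_of_lt (ha0.trans hq₁), hq₂⟩
      have h2 : ν (θ (q₀ : ℝ)) ≤ ν (θ (a : ℝ)) :=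
        measure_mono (hθmono _ _ (le_of_lt ha0) (le_of_lt hq₁))
      have : ((F b : ℝ)) < ((F a : ℝ)) := by
        calc (F b : ℝ) < (L (b : ℝ)).toReal := hF2 b
          _ ≤ (ν (θ (a : ℝ))).toReal :=
            ENNReal.toReal_mono (measure_ne_top ν _) (h1.trans h2)
          _ < (F a : ℝ) := hF1 a
      exact_mod_cast this
    have hinj : Function.Injective F := by
      intro a b hab
      rcases lt_trichotomy (a : ℝ) (b : ℝ) with h | h | h
      · exact absurd hab (ne_of_gt (haux a b h))
      · exact Subtype.ext h
      · exact absurd hab (ne_of_lt (haux b a h))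
    have : Countable ↥E₀ := hinj.countable
    exact Set.countable_coe_iff.mp this
  set E : Set ℝ := insert 0 E₀ with hE
  have hEc : E.Countable := hE₀.insert 0
  set V : Set (ℝ × α) :=
    (⋂ q : ℚ, {p : ℝ × α | 0 ≤ (q : ℝ) ∧ (q : ℝ) < |p.1| → p.2 ∈ H (q : ℝ)}) ∩
      ⋂ a ∈ E, {p : ℝ × α | |p.1| = a → p.2 ∈ H a} with hV
  have hVmeas : MeasurableSet V := by
    apply MeasurableSet.inter
    · refine MeasurableSet.iInter fun q => ?_
      by_cases hq : 0 ≤ (q : ℝ)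
      · have : {p : ℝ × α | 0 ≤ (q : ℝ) ∧ (q : ℝ) < |p.1| → p.2 ∈ H (q : ℝ)} =
            {p : ℝ × α | (q : ℝ) < |p.1|}ᶜ ∪ {p : ℝ × α | p.2 ∈ H (q : ℝ)} := by
          ext p; simp [imp_iff_not_or, hq]
        rw [this]
        refine MeasurableSet.union ?_ (measurable_snd (measurableSet_toMeasurable ν _))
        exact (measurable_fst.abs (measurableSet_Ioi : MeasurableSet (Set.Ioi (q : ℝ)))).compl
      · have : {p : ℝ × α | 0 ≤ (q : ℝ) ∧ (q : ℝ) < |p.1| → p.2 ∈ H (q : ℝ)} = Set.univ := by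
          ext p; simp [hq]
        rw [this]; exact MeasurableSet.univ
    · exact MeasurableSet.biInter hEc fun a _ => by
        have : {p : ℝ × α | |p.1| = a → p.2 ∈ H a} =
            {p : ℝ × α | |p.1| = a}ᶜ ∪ {p : ℝ × α | p.2 ∈ H a} := by
          ext p; simp [imp_iff_not_or]
        rw [this]
        exact ((measurable_fst.abs (measurableSet_singleton a)).compl).union
          (measurable_snd (measurableSet_toMeasurable ν _))
  have hAV : A ⊆ V := by
    rintro ⟨s, x⟩ hsx
    constructor
    · refine Set.mem_iInter.mpr fun q => ?_
      intro ⟨hq0, hqs⟩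
      have : (↑q, x) ∈ A := hA s (q : ℝ) x hsx (by rw [abs_of_nonneg hq0]; exact le_of_lt hqs)
      exact subset_toMeasurable ν _ this
    · refine Set.mem_iInter₂.mpr fun a _ => ?_
      intro ha
      have : (|s|, x) ∈ A := hA s |s| x hsx (by rw [abs_abs])
      simp only [← ha]
      exact subset_toMeasurable ν _ this
  have hsec : ∀ s : ℝ, ν (Prod.mk s ⁻¹' V) ≤ ν (θ s) := by
    intro s
    have hevs : ν (θ s) = ν (θ |s|) := congrArg ν (hθeven s)
    by_cases hmem : |s| ∈ E
    · have hsub : Prod.mk s ⁻¹' V ⊆ H |s| := by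
        intro x hx
        have h2 := hx.2
        have := Set.mem_iInter₂.mp h2 |s| hmem
        exact this rfl
      calc ν (Prod.mk s ⁻¹' V) ≤ ν (H |s|) := measure_mono hsub
        _ = ν (θ |s|) := measure_toMeasurable _
        _ = ν (θ s) := hevs.symm
    · have hne : |s| ≠ 0 := fun h => hmem (h ▸ Set.mem_insert 0 E₀)
      have hpos : 0 < |s| := lt_of_le_of_ne (abs_nonneg s) (Ne.symm hne)
      have hnE₀ : |s| ∉ E₀ := fun h => hmem (Set.mem_insert_of_mem 0 h)
      have hLle : L |s| ≤ ν (θ |s|) := by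
        by_contra hlt
        exact hnE₀ ⟨hpos, not_le.mp hlt⟩
      have hVle : ν (Prod.mk s ⁻¹' V) ≤ L |s| := by
        refine le_iInf₂ fun q hq => ?_
        have hsub : Prod.mk s ⁻¹' V ⊆ H (q : ℝ) := by
          intro x hx
          exact Set.mem_iInter.mp hx.1 q hq
        calc ν (Prod.mk s ⁻¹' V) ≤ ν (H (q : ℝ)) := measure_mono hsub
          _ = ν (θ (q : ℝ)) := measure_toMeasurable _
      calc ν (Prod.mk s ⁻¹' V) ≤ L |s| := hVle
        _ ≤ ν (θ |s|) := hLle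
        _ = ν (θ s) := hevs.symm
  calc ρ.prod ν A ≤ ρ.prod ν V := measure_mono hAV
    _ = ∫⁻ s, ν (Prod.mk s ⁻¹' V) ∂ρ := Measure.prod_apply hVmeas
    _ ≤ ∫⁻ s, ν (Prod.mk s ⁻¹' A) ∂ρ := lintegral_mono hsec

/-- Lower bound: integral of section measures is at most the (outer) product measure. -/
lemma lemmaB {α : Type*} [MeasurableSpace α] (ρ : Measure ℝ) (ν : Measure α)
    [SigmaFinite ν] (C : Set (ℝ × α)) :
    ∫⁻ s, ν (Prod.mk s ⁻¹' C) ∂ρ ≤ ρ.prod ν C := by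
  conv_rhs => rw [← measure_toMeasurable C]
  rw [Measure.prod_apply (measurableSet_toMeasurable _ _)]
  exact lintegral_mono fun s =>
    measure_mono (Set.preimage_mono (subset_toMeasurable _ _))

/-- Single coordinate update stays in an unconditional convex set. -/
lemma update_mem {d : ℕ} {K : Set (Fin d → ℝ)} (hconv : Convex ℝ K)
    (hu : Unconditional d K) {z : Fin d → ℝ} (hz : z ∈ K) (j : Fin d) (c : ℝ)
    (hc : |c| ≤ |z j|) : Function.update z j c ∈ K := by
  classical
  rcases eq_or_ne (z j) 0 with h0 | h0
  · have hc0 : c = 0 := by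
      rw [h0, abs_zero] at hc
      exact abs_eq_zero.mp (le_antisymm hc (abs_nonneg c))
    rw [hc0, ← h0, Function.update_eq_self]
    exact hz
  · set t : ℝ := (c / z j + 1) / 2 with ht
    have habs : |c / z j| ≤ 1 := by
      rw [abs_div]
      exact (div_le_one (abs_pos.mpr h0)).mpr hc
    obtain ⟨hm1, hp1⟩ := abs_le.mp habs
    have ht0 : 0 ≤ t := by rw [ht]; linarith
    have ht1 : 1 - t ≥ 0 := by rw [ht]; linarith
    set ε : Fin d → ℝ := fun i => if i = j then (-1 : ℝ) else 1 with hε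
    have hw : (fun i => ε i * z i) ∈ K := by
      refine hu z hz ε fun i => ?_
      by_cases h : i = j <;> simp [hε, h]
    have hcomb := hconv hz hw ht0 ht1 (by ring)
    have heq : t • z + (1 - t) • (fun i => ε i * z i) = Function.update z j c := by
      funext i
      by_cases h : i = j
      · subst h
        simp only [Pi.add_apply, Pi.smul_apply, smul_eq_mul, Function.update_self]
        have hεi : ε i = -1 := by simp [hε]
        rw [hεi]
        have h2 : t * z i + (1 - t) * (-1 * z i) = (2 * t - 1) * z i := by ring
        rw [h2]
        have h2t : 2 * t - 1 = c / z i := by rw [ht]; ring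
        rw [h2t, div_mul_cancel₀ c h0]
      · simp only [Pi.add_apply, Pi.smul_apply, smul_eq_mul, Function.update_of_ne h, hε,
          if_neg h]
        ring
    rw [← heq]
    exact hcomb

/-- Unconditional convex sets are "solid". -/
lemma solid_of_convex_uncond {d : ℕ} {K : Set (Fin d → ℝ)} (hconv : Convex ℝ K)
    (hu : Unconditional d K) :
    ∀ x ∈ K, ∀ y : Fin d → ℝ, (∀ i, |y i| ≤ |x i|) → y ∈ K := by
  classical
  intro x hx y hy
  have key : ∀ S : Finset (Fin d), (fun i => if i ∈ S then y i else x i) ∈ K := by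
    intro S
    induction S using Finset.induction_on with
    | empty => simpa using hx
    | @insert j S hjS IH =>
      set z : Fin d → ℝ := fun i => if i ∈ S then y i else x i with hzdef
      have hzj : z j = x j := by simp [hzdef, hjS]
      have hupd : Function.update z j (y j) ∈ K :=
        update_mem hconv hu IH j (y j) (by rw [hzj]; exact hy j)
      have : (fun i => if i ∈ insert j S then y i else x i) = Function.update z j (y j) := by
        funext i
        by_cases h : i = j
        · subst h; simp [hzdef]
        · simp [hzdef, Function.update_of_ne h, h]
      rw [this]
      exact hupd
  have := key Finset.univ
  simpa using this

/-- Flipping to absolute values stays inside. -/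
lemma abs_mem_of_uncond {d : ℕ} {K : Set (Fin d → ℝ)} (hu : Unconditional d K)
    {x : Fin d → ℝ} (hx : x ∈ K) : (fun i => |x i|) ∈ K := by
  have := hu x hx (fun i => if x i < 0 then -1 else 1) (fun i => by
    by_cases h : x i < 0 <;> simp [h])
  convert this using 1
  funext i
  by_cases h : x i < 0
  · simp [h, abs_of_neg h]
  · simp [h, abs_of_nonneg (not_lt.mp h)]

lemma uncond_add {d : ℕ} {K T : Set (Fin d → ℝ)} (hKu : Unconditional d K)
    (hTu : Unconditional d T) : Unconditional d (K + T) := by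
  intro z hz ε hε
  obtain ⟨a, ha, b, hb, rfl⟩ := Set.mem_add.mp hz
  have : (fun i => ε i * (a + b) i) = (fun i => ε i * a i) + fun i => ε i * b i := by
    funext i; simp [Pi.add_apply]; ring
  rw [this]
  exact Set.add_mem_add (hKu a ha ε hε) (hTu b hb ε hε)
def SolidSet {d : ℕ} (A : Set (Fin d → ℝ)) : Prop :=
  ∀ x ∈ A, ∀ y : Fin d → ℝ, (∀ i, |y i| ≤ |x i|) → y ∈ A

theorem mainAD : ∀ (d : ℕ) (μ : Fin d → Measure ℝ),
    (∀ i, IsProbabilityMeasure (μ i)) →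
    ∀ A B C D : Set (Fin d → ℝ), SolidSet A → SolidSet B → SolidSet C → SolidSet D →
    (∀ x ∈ A, ∀ y ∈ B,
      (fun i => max |x i| |y i|) ∈ C ∧ (fun i => min |x i| |y i|) ∈ D) →
    Measure.pi μ A * Measure.pi μ B ≤ Measure.pi μ C * Measure.pi μ D := by
  intro d
  induction d with
  | zero =>
    intro μ hprob A B C D _ _ _ _ hyp
    haveI : ∀ i, IsProbabilityMeasure (μ i) := hprob
    haveI : Subsingleton (Fin 0 → ℝ) := ⟨fun f g => funext fun i => i.elim0⟩
    rcases A.eq_empty_or_nonempty with hA0 | ⟨x, hx⟩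
    · simp [hA0]
    rcases B.eq_empty_or_nonempty with hB0 | ⟨y, hy⟩
    · simp [hB0]
    obtain ⟨hC1, hD1⟩ := hyp x hx y hy
    have huniv : ∀ (S : Set (Fin 0 → ℝ)) (z : Fin 0 → ℝ), z ∈ S → S = Set.univ := by
      intro S z hz
      exact Set.eq_univ_of_forall fun w => by rwa [Subsingleton.elim w z]
    rw [huniv A x hx, huniv B y hy, huniv C _ hC1, huniv D _ hD1]
  | succ d IH =>
    intro μ hprob A B C D hA hB hC hD hyp
    haveI : ∀ i, IsProbabilityMeasure (μ i) := hprob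
    set e := MeasurableEquiv.piFinSuccAbove (fun _ : Fin (d + 1) => ℝ) 0 with he
    set ρ := μ 0 with hρ
    set μ' : Fin d → Measure ℝ := fun j => μ ((0 : Fin (d + 1)).succAbove j) with hμ'
    haveI : ∀ j, IsProbabilityMeasure (μ' j) := fun j => hprob _
    set ν := Measure.pi μ' with hν
    haveI : IsProbabilityMeasure ν := by rw [hν]; infer_instance
    have hmp : MeasurePreserving e (Measure.pi μ) (ρ.prod ν) :=
      measurePreserving_piFinSuccAbove μ 0
    have hsymm_apply : ∀ (s : ℝ) (x : Fin d → ℝ), e.symm (s, x) = Fin.cons s x := by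
      intro s x
      ext i
      simp [he, MeasurableEquiv.piFinSuccAbove]
    have htrans : ∀ S : Set (Fin (d + 1) → ℝ),
        Measure.pi μ S = (ρ.prod ν) {p : ℝ × (Fin d → ℝ) | Fin.cons p.1 p.2 ∈ S} := by
      intro S
      have h1 : {p : ℝ × (Fin d → ℝ) | Fin.cons p.1 p.2 ∈ S} = e.symm ⁻¹' S := by
        ext p
        rw [Set.mem_preimage, ← Prod.mk.eta (p := p), hsymm_apply p.1 p.2]
        rfl
      rw [h1, ← hmp.map_eq, MeasurableEquiv.map_apply]
      congr 1
      ext x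
      simp
    -- sections
    set SA : ℝ → Set (Fin d → ℝ) := fun s => {x | Fin.cons s x ∈ A} with hSA
    set SB : ℝ → Set (Fin d → ℝ) := fun s => {x | Fin.cons s x ∈ B} with hSB
    set SC : ℝ → Set (Fin d → ℝ) := fun s => {x | Fin.cons s x ∈ C} with hSC
    set SD : ℝ → Set (Fin d → ℝ) := fun s => {x | Fin.cons s x ∈ D} with hSD
    -- generic section facts
    have hconsle : ∀ (s t : ℝ) (x y : Fin d → ℝ), |t| ≤ |s| → (∀ j, |y j| ≤ |x j|) →
        (∀ i : Fin (d + 1), |(Fin.cons t y : Fin (d+1) → ℝ) i| ≤ |(Fin.cons s x : Fin (d+1) → ℝ) i|) := by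
      intro s t x y hts hxy i
      induction i using Fin.cases with
      | zero => simpa using hts
      | succ j => simpa using hxy j
    have hsolidsec : ∀ (S : Set (Fin (d + 1) → ℝ)), SolidSet S → ∀ s : ℝ,
        SolidSet {x | Fin.cons s x ∈ S} := by
      intro S hS s x hx y hy
      exact hS _ hx (Fin.cons s y) (hconsle s s x y (le_refl _) hy)
    have hseceven : ∀ (S : Set (Fin (d + 1) → ℝ)), SolidSet S → ∀ s : ℝ,
        {x | Fin.cons s x ∈ S} = {x | Fin.cons |s| x ∈ S} := by
      intro S hS s
      ext x
      constructor
      · intro hx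
        exact hS _ hx (Fin.cons |s| x) (hconsle s |s| x x (by rw [abs_abs]) fun j => le_refl _)
      · intro hx
        exact hS _ hx (Fin.cons s x) (hconsle |s| s x x (by rw [abs_abs]) fun j => le_refl _)
    have hsecmono : ∀ (S : Set (Fin (d + 1) → ℝ)), SolidSet S →
        Antitone (fun u : ℝ => ν {x | Fin.cons (max u 0) x ∈ S}) := by
      intro S hS u v huv
      refine measure_mono fun x hx => ?_
      refine hS _ hx (Fin.cons (max u 0) x) (hconsle _ _ x x ?_ fun j => le_refl _)
      rw [abs_of_nonneg (le_max_right u 0), abs_of_nonneg (le_max_right v 0)]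
      exact max_le_max huv (le_refl 0)
    have hsecmeas : ∀ (S : Set (Fin (d + 1) → ℝ)), SolidSet S →
        Measurable (fun s : ℝ => ν {x | Fin.cons s x ∈ S}) := by
      intro S hS
      have heq : (fun s : ℝ => ν {x | Fin.cons s x ∈ S}) =
          (fun u : ℝ => ν {x | Fin.cons (max u 0) x ∈ S}) ∘ (fun s : ℝ => |s|) := by
        funext s
        have : max |s| 0 = |s| := max_eq_left (abs_nonneg s)
        simp only [Function.comp_apply, this]
        exact congrArg ν (hseceven S hS s)
      rw [heq]
      exact ((hsecmono S hS).measurable).comp measurable_abs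
    have heven' : ∀ (S : Set (Fin (d + 1) → ℝ)), SolidSet S → ∀ s : ℝ,
        ν {x | Fin.cons s x ∈ S} = ν {x | Fin.cons |s| x ∈ S} := by
      intro S hS s
      exact congrArg ν (hseceven S hS s)
    -- the four section-measure functions
    set φ : ℝ → ℝ≥0∞ := fun s => ν (SA s) with hφdef
    set ψ : ℝ → ℝ≥0∞ := fun s => ν (SB s) with hψdef
    set γ : ℝ → ℝ≥0∞ := fun s => ν (SC s) with hγdef
    set δ : ℝ → ℝ≥0∞ := fun s => ν (SD s) with hδdef
    -- hypothesis for 1D lemma via induction hypothesis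
    have hyp1 : ∀ s t : ℝ, φ s * ψ t ≤ γ (max |s| |t|) * δ (min |s| |t|) := by
      intro s t
      refine IH μ' (fun j => hprob _) (SA s) (SB t) (SC (max |s| |t|)) (SD (min |s| |t|))
        (hsolidsec A hA s) (hsolidsec B hB t) (hsolidsec C hC _) (hsolidsec D hD _) ?_
      intro x hx y hy
      obtain ⟨h1, h2⟩ := hyp (Fin.cons s x) hx (Fin.cons t y) hy
      constructor
      · have heqc : (fun i => max |(Fin.cons s x : Fin (d+1) → ℝ) i| |(Fin.cons t y : Fin (d+1) → ℝ) i|) =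
            Fin.cons (α := fun _ => ℝ) (max |s| |t|) (fun j => max |x j| |y j|) := by
          funext i
          induction i using Fin.cases with
          | zero => simp
          | succ j => simp
        rw [heqc] at h1
        exact h1
      · have heqc : (fun i => min |(Fin.cons s x : Fin (d+1) → ℝ) i| |(Fin.cons t y : Fin (d+1) → ℝ) i|) =
            Fin.cons (α := fun _ => ℝ) (min |s| |t|) (fun j => min |x j| |y j|) := by
          funext i
          induction i using Fin.cases with
          | zero => simp
          | succ j => simp
        rw [heqc] at h2
        exact h2
    -- apply the 1D four functions lemma
    have h1D : (∫⁻ s, φ s ∂ρ) * ∫⁻ s, ψ s ∂ρ ≤ (∫⁻ s, γ s ∂ρ) * ∫⁻ s, δ s ∂ρ :=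
      oneDim ρ φ ψ γ δ (hsecmeas A hA) (hsecmeas B hB) (hsecmeas C hC) (hsecmeas D hD)
        (heven' A hA) (heven' B hB) (heven' C hC) (heven' D hD) hyp1
    -- outer measure bounds
    have hfsA : ∀ s t (x : Fin d → ℝ),
        (s, x) ∈ {p : ℝ × (Fin d → ℝ) | Fin.cons p.1 p.2 ∈ A} → |t| ≤ |s| →
        (t, x) ∈ {p : ℝ × (Fin d → ℝ) | Fin.cons p.1 p.2 ∈ A} := by
      intro s t x hx hts
      exact hA _ hx (Fin.cons t x) (hconsle s t x x hts fun j => le_refl _)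
    have hfsB : ∀ s t (x : Fin d → ℝ),
        (s, x) ∈ {p : ℝ × (Fin d → ℝ) | Fin.cons p.1 p.2 ∈ B} → |t| ≤ |s| →
        (t, x) ∈ {p : ℝ × (Fin d → ℝ) | Fin.cons p.1 p.2 ∈ B} := by
      intro s t x hx hts
      exact hB _ hx (Fin.cons t x) (hconsle s t x x hts fun j => le_refl _)
    have hupA : (ρ.prod ν) {p : ℝ × (Fin d → ℝ) | Fin.cons p.1 p.2 ∈ A} ≤ ∫⁻ s, φ s ∂ρ :=
      lemmaA ρ ν _ hfsA
    have hupB : (ρ.prod ν) {p : ℝ × (Fin d → ℝ) | Fin.cons p.1 p.2 ∈ B} ≤ ∫⁻ s, ψ s ∂ρ :=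
      lemmaA ρ ν _ hfsB
    have hloC : ∫⁻ s, γ s ∂ρ ≤ (ρ.prod ν) {p : ℝ × (Fin d → ℝ) | Fin.cons p.1 p.2 ∈ C} :=
      lemmaB ρ ν _
    have hloD : ∫⁻ s, δ s ∂ρ ≤ (ρ.prod ν) {p : ℝ × (Fin d → ℝ) | Fin.cons p.1 p.2 ∈ D} :=
      lemmaB ρ ν _
    calc Measure.pi μ A * Measure.pi μ B
        = (ρ.prod ν) {p : ℝ × (Fin d → ℝ) | Fin.cons p.1 p.2 ∈ A} *
          (ρ.prod ν) {p : ℝ × (Fin d → ℝ) | Fin.cons p.1 p.2 ∈ B} := by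
          rw [htrans A, htrans B]
      _ ≤ (∫⁻ s, φ s ∂ρ) * ∫⁻ s, ψ s ∂ρ := mul_le_mul' hupA hupB
      _ ≤ (∫⁻ s, γ s ∂ρ) * ∫⁻ s, δ s ∂ρ := h1D
      _ ≤ (ρ.prod ν) {p : ℝ × (Fin d → ℝ) | Fin.cons p.1 p.2 ∈ C} *
          (ρ.prod ν) {p : ℝ × (Fin d → ℝ) | Fin.cons p.1 p.2 ∈ D} := mul_le_mul' hloC hloD
      _ = Measure.pi μ C * Measure.pi μ D := by rw [htrans C, htrans D]

/-- For a symmetric product probability measure `μ = μ₁ ⊗ ⋯ ⊗ μ_d` on `ℝ^d` and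
unconditional convex sets `K, T`, one has `μ(K+T) · μ(K ∩ T) ≥ μ(K) · μ(T)`. -/
theorem stmt4 (d : ℕ) (μ : Fin d → Measure ℝ) [∀ i, IsProbabilityMeasure (μ i)]
    (hsymm : ∀ i, (μ i).map (fun x => -x) = μ i)
    (K T : Set (Fin d → ℝ)) (hK : Convex ℝ K) (hT : Convex ℝ T)
    (hKu : Unconditional d K) (hTu : Unconditional d T) :
    Measure.pi μ K * Measure.pi μ T ≤
      Measure.pi μ (K + T) * Measure.pi μ (K ∩ T) := by
  classical
  have hKs : SolidSet K := solid_of_convex_uncond hK hKu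
  have hTs : SolidSet T := solid_of_convex_uncond hT hTu
  have hKTs : SolidSet (K + T) := solid_of_convex_uncond (hK.add hT) (uncond_add hKu hTu)
  have hKiTs : SolidSet (K ∩ T) := fun x hx y hy => ⟨hKs x hx.1 y hy, hTs x hx.2 y hy⟩
  refine mainAD d μ (fun i => inferInstance) K T (K + T) (K ∩ T) hKs hTs hKTs hKiTs ?_
  intro x hx y hy
  have hax : (fun i => |x i|) ∈ K := abs_mem_of_uncond hKu hx
  have hay : (fun i => |y i|) ∈ T := abs_mem_of_uncond hTu hy
  have hsum : ((fun i => |x i|) + fun i => |y i|) ∈ K + T := Set.add_mem_add hax hay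
  refine ⟨?_, ?_, ?_⟩
  · refine hKTs _ hsum (fun i => max |x i| |y i|) fun i => ?_
    have h1 : |(max |x i| |y i| : ℝ)| = max |x i| |y i| :=
      abs_of_nonneg ((abs_nonneg (x i)).trans (le_max_left _ _))
    have h2 : |((fun i => |x i|) + fun i => |y i|) i| = |x i| + |y i| := by
      simp [Pi.add_apply, abs_of_nonneg (add_nonneg (abs_nonneg (x i)) (abs_nonneg (y i)))]
    rw [h1, h2]
    exact max_le (le_add_of_nonneg_right (abs_nonneg _)) (le_add_of_nonneg_left (abs_nonneg _))
  · refine hKs x hx _ fun i => ?_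
    rw [abs_of_nonneg (le_min (abs_nonneg _) (abs_nonneg _))]
    exact min_le_left _ _
  · refine hTs y hy _ fun i => ?_
    rw [abs_of_nonneg (le_min (abs_nonneg _) (abs_nonneg _))]
    exact min_le_right _ _
end

section
/- Let μ be a product measure on ℝ^d and f_1, f_2, f_3, f_4 nonnegative measurable functions on ℝ^d satisfying f_1(x)·f_2(y) ≤ f_3(x ∨ y)·f_4(x ∧ y) for all x, y ∈ ℝ^d, where ∨ and ∧ denote coordinatewise maximum and minimum. Then (∫ f_1 dμ)(∫ f_2 dμ) ≤ (∫ f_3 dμ)(∫ f_4 dμ). -/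
/-!
In dimension one, integrating the inequality over both `(x, y)` and `(y, x)` reduces the
theorem to a pointwise statement about four numbers: if `a, b ≤ c` and `a b ≤ c e` then
`a + b ≤ c + e`, which holds because `(c - a) (c - b) ≥ 0`. The four functions inequality is
preserved by products of measures (Fubini: apply it to the inner integrals, which satisfy the
hypothesis by the inequality in the inner variable) and transported along measure-preserving
lattice homomorphisms, so induction on the dimension gives it for `Measure.pi`.
-/

open MeasureTheory
open scoped ENNReal NNReal

theorem ENNReal.add_le_add_of_mul_le_mul {a b c e : ℝ≥0∞} (ha : a ≤ c) (hb : b ≤ c)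
    (h : a * b ≤ c * e) : a + b ≤ c + e := by
  rcases eq_or_ne c 0 with rfl | hc₀
  · simp_all
  rcases eq_or_ne c ⊤ with rfl | hc; · simp
  rcases eq_or_ne e ⊤ with rfl | he; · simp
  lift c to ℝ≥0 using hc
  lift e to ℝ≥0 using he
  lift a to ℝ≥0 using ne_top_of_le_ne_top coe_ne_top ha
  lift b to ℝ≥0 using ne_top_of_le_ne_top coe_ne_top hb
  have hc : (0 : ℝ) < c := by simpa [pos_iff_ne_zero] using hc₀
  norm_cast at *
  rw [← NNReal.coe_le_coe] at *
  push_cast at *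
  -- `c (a + b) ≤ c² + a b ≤ c (c + e)`
  nlinarith [mul_nonneg (sub_nonneg.2 ha) (sub_nonneg.2 hb)]

theorem mul_add_mul_swap_le_of_le_sup_mul_inf {α : Type*} [LinearOrder α]
    {f₁ f₂ f₃ f₄ : α → ℝ≥0∞} (h : ∀ x y, f₁ x * f₂ y ≤ f₃ (x ⊔ y) * f₄ (x ⊓ y)) (x y : α) :
    f₁ x * f₂ y + f₁ y * f₂ x ≤ f₃ x * f₄ y + f₃ y * f₄ x := by
  wlog hxy : x ≤ y generalizing x y
  · simpa only [add_comm] using this y x (le_of_not_ge hxy)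
  have hxy' := h x y
  have hyx := h y x
  have hxx := h x x
  have hyy := h y y
  simp only [sup_of_le_right hxy, inf_of_le_left hxy, sup_of_le_left hxy, inf_of_le_right hxy,
    sup_idem, inf_idem] at hxy' hyx hxx hyy
  rw [add_comm (f₃ x * f₄ y)]
  refine ENNReal.add_le_add_of_mul_le_mul hxy' hyx ?_
  calc f₁ x * f₂ y * (f₁ y * f₂ x) = f₁ x * f₂ x * (f₁ y * f₂ y) := by ring
    _ ≤ f₃ x * f₄ x * (f₃ y * f₄ y) := mul_le_mul' hxx hyy
    _ = f₃ y * f₄ x * (f₃ x * f₄ y) := by ring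

theorem lintegral_lintegral_mul_add_mul_swap {α : Type*} [MeasurableSpace α] {μ : Measure α}
    {f g : α → ℝ≥0∞} (hf : Measurable f) (hg : Measurable g) :
    ∫⁻ x, ∫⁻ y, (f x * g y + f y * g x) ∂μ ∂μ = 2 * ((∫⁻ x, f x ∂μ) * ∫⁻ x, g x ∂μ) := by
  have inner (x : α) : ∫⁻ y, (f x * g y + f y * g x) ∂μ =
      f x * ∫⁻ y, g y ∂μ + (∫⁻ y, f y ∂μ) * g x := by
    rw [lintegral_add_left (hg.const_mul _), lintegral_const_mul _ hg, lintegral_mul_const _ hf]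
  simp_rw [inner]
  rw [lintegral_add_left (hf.mul_const _), lintegral_mul_const _ hf, lintegral_const_mul _ hg]
  ring

def SatisfiesFourFunctions {X : Type*} [MeasurableSpace X] [Lattice X] (μ : Measure X) : Prop :=
  ∀ f₁ f₂ f₃ f₄ : X → ℝ≥0∞, Measurable f₁ → Measurable f₂ → Measurable f₃ → Measurable f₄ →
    (∀ x y, f₁ x * f₂ y ≤ f₃ (x ⊔ y) * f₄ (x ⊓ y)) →
    (∫⁻ x, f₁ x ∂μ) * (∫⁻ x, f₂ x ∂μ) ≤ (∫⁻ x, f₃ x ∂μ) * (∫⁻ x, f₄ x ∂μ)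

theorem satisfiesFourFunctions_of_linearOrder {α : Type*} [MeasurableSpace α] [LinearOrder α]
    (μ : Measure α) : SatisfiesFourFunctions μ := by
  intro f₁ f₂ f₃ f₄ h₁ h₂ h₃ h₄ h
  have key : ∫⁻ x, ∫⁻ y, (f₁ x * f₂ y + f₁ y * f₂ x) ∂μ ∂μ ≤
      ∫⁻ x, ∫⁻ y, (f₃ x * f₄ y + f₃ y * f₄ x) ∂μ ∂μ :=
    lintegral_mono fun x ↦ lintegral_mono fun y ↦ mul_add_mul_swap_le_of_le_sup_mul_inf h x y
  rw [lintegral_lintegral_mul_add_mul_swap h₁ h₂, lintegral_lintegral_mul_add_mul_swap h₃ h₄]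
    at key
  exact (ENNReal.mul_le_mul_iff_right two_ne_zero ENNReal.ofNat_ne_top).mp key

theorem satisfiesFourFunctions_dirac {X : Type*} [MeasurableSpace X] [Lattice X] (x : X) :
    SatisfiesFourFunctions (Measure.dirac x) := by
  intro f₁ f₂ f₃ f₄ h₁ h₂ h₃ h₄ h
  simpa only [lintegral_dirac' x h₁, lintegral_dirac' x h₂, lintegral_dirac' x h₃,
    lintegral_dirac' x h₄, sup_idem, inf_idem] using h x x

namespace SatisfiesFourFunctions

variable {X Y : Type*} [MeasurableSpace X] [Lattice X] [MeasurableSpace Y] [Lattice Y]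
  {μ : Measure X} {ν : Measure Y}

theorem of_measurePreserving (hμ : SatisfiesFourFunctions μ) {e : X → Y}
    (he : MeasurePreserving e μ ν) (hsup : ∀ x y, e (x ⊔ y) = e x ⊔ e y)
    (hinf : ∀ x y, e (x ⊓ y) = e x ⊓ e y) : SatisfiesFourFunctions ν := by
  intro f₁ f₂ f₃ f₄ h₁ h₂ h₃ h₄ h
  simp only [← he.lintegral_comp h₁, ← he.lintegral_comp h₂, ← he.lintegral_comp h₃,
    ← he.lintegral_comp h₄]
  refine hμ _ _ _ _ (h₁.comp he.measurable) (h₂.comp he.measurable) (h₃.comp he.measurable)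
    (h₄.comp he.measurable) fun x y ↦ ?_
  simpa only [Function.comp_apply, hsup, hinf] using h (e x) (e y)

theorem prod (hμ : SatisfiesFourFunctions μ) (hν : SatisfiesFourFunctions ν) [SFinite ν] :
    SatisfiesFourFunctions (μ.prod ν) := by
  intro f₁ f₂ f₃ f₄ h₁ h₂ h₃ h₄ h
  simp only [lintegral_prod _ h₁.aemeasurable, lintegral_prod _ h₂.aemeasurable,
    lintegral_prod _ h₃.aemeasurable, lintegral_prod _ h₄.aemeasurable]
  refine hμ _ _ _ _ h₁.lintegral_prod_right' h₂.lintegral_prod_right'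
    h₃.lintegral_prod_right' h₄.lintegral_prod_right' fun x x' ↦ ?_
  refine hν _ _ _ _ (h₁.comp measurable_prodMk_left) (h₂.comp measurable_prodMk_left)
    (h₃.comp measurable_prodMk_left) (h₄.comp measurable_prodMk_left) fun y y' ↦ ?_
  simpa only [Prod.mk_sup_mk, Prod.mk_inf_mk] using h (x, y) (x', y')

end SatisfiesFourFunctions

theorem satisfiesFourFunctions_pi : ∀ {n : ℕ} {α : Fin n → Type*} [∀ i, MeasurableSpace (α i)]
    [∀ i, Lattice (α i)] {μ : ∀ i, Measure (α i)} [∀ i, SigmaFinite (μ i)],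
    (∀ i, SatisfiesFourFunctions (μ i)) → SatisfiesFourFunctions (Measure.pi μ)
  | 0, _, _, _, μ, _, _ => by
    rw [Measure.pi_of_empty μ]
    exact satisfiesFourFunctions_dirac _
  | n + 1, α, _, _, μ, _, hμ => by
    refine ((hμ 0).prod (satisfiesFourFunctions_pi fun j ↦ hμ _)).of_measurePreserving
      (measurePreserving_piFinSuccAbove μ 0).symm (fun x y ↦ ?_) (fun x y ↦ ?_)
    · exact map_sup (Fin.insertNthOrderIso α 0) x y
    · exact map_inf (Fin.insertNthOrderIso α 0) x y

/-- Karlin–Rinott theorem (continuous four-functions / Ahlswede–Daykin theorem):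
for a product measure `μ` on `ℝ^d` and nonnegative measurable functions `f₁, f₂, f₃, f₄`
with `f₁(x)·f₂(y) ≤ f₃(x ∨ y)·f₄(x ∧ y)`, one has `∫f₁ ∫f₂ ≤ ∫f₃ ∫f₄`. -/
theorem stmt7 (d : ℕ) (μ : Fin d → Measure ℝ) [∀ i, SigmaFinite (μ i)]
    (f₁ f₂ f₃ f₄ : (Fin d → ℝ) → ℝ≥0∞)
    (h₁ : Measurable f₁) (h₂ : Measurable f₂) (h₃ : Measurable f₃) (h₄ : Measurable f₄)
    (h : ∀ x y, f₁ x * f₂ y ≤ f₃ (x ⊔ y) * f₄ (x ⊓ y)) :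
    (∫⁻ x, f₁ x ∂Measure.pi μ) * (∫⁻ x, f₂ x ∂Measure.pi μ) ≤
      (∫⁻ x, f₃ x ∂Measure.pi μ) * (∫⁻ x, f₄ x ∂Measure.pi μ) :=
  satisfiesFourFunctions_pi (fun i ↦ satisfiesFourFunctions_of_linearOrder (μ i))
    f₁ f₂ f₃ f₄ h₁ h₂ h₃ h₄ h
end

section
/- Let K, T ⊆ ℝ^d be unconditional convex sets and Q = {x ∈ ℝ^d : x_i ≥ 0 for all i} the positive orthant. If x ∈ K ∩ Q and y ∈ T ∩ Q, then x ∧ y ∈ K ∩ T ∩ Q and x ∨ y ∈ (K+T) ∩ Q, where ∧, ∨ denote coordinatewise minimum and maximum. -/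
open scoped Pointwise

lemma squeeze_mem (d : ℕ) (K : Set (Fin d → ℝ)) (hK : Convex ℝ K)
    (hKu : Unconditional d K) (x : Fin d → ℝ) (hx : x ∈ K)
    (z : Fin d → ℝ) (hz0 : ∀ i, 0 ≤ z i) (hzx : ∀ i, z i ≤ x i) : z ∈ K := by
  have aux : ∀ s : Finset (Fin d), ∀ z : Fin d → ℝ,
      (∀ i, 0 ≤ z i) → (∀ i, z i ≤ x i) → (∀ i ∉ s, z i = x i) → z ∈ K := by
    intro s
    induction s using Finset.induction_on with
    | empty =>
      intro z _ _ h
      have : z = x := funext fun i => h i (Finset.notMem_empty i)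
      rwa [this]
    | @insert j s' hj ih =>
      intro z hz0 hzx hout
      by_cases hxj : x j = 0
      · apply ih z hz0 hzx
        intro i hi
        by_cases hij : i = j
        · subst hij; linarith [hz0 i, hzx i]
        · exact hout i (by simp [hij, hi])
      · have hxj' : 0 < x j := lt_of_le_of_ne (le_trans (hz0 j) (hzx j)) (Ne.symm hxj)
        set z' := Function.update z j (x j) with hz'
        set z'' := Function.update z j (-(x j)) with hz''
        have hz'K : z' ∈ K := by
          apply ih
          · intro i
            by_cases hij : i = j
            · subst hij; simp [hz', le_of_lt hxj']
            · simp [hz', Function.update_of_ne hij]; exact hz0 i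
          · intro i
            by_cases hij : i = j
            · subst hij; simp [hz']
            · simp [hz', Function.update_of_ne hij]; exact hzx i
          · intro i hi
            by_cases hij : i = j
            · subst hij; simp [hz']
            · rw [hz', Function.update_of_ne hij]
              exact hout i (by simp [hij, hi])
        have hz''K : z'' ∈ K := by
          have := hKu z' hz'K (fun i => if i = j then -1 else 1)
            (fun i => by by_cases h : i = j <;> simp [h])
          convert this using 1
          funext i
          by_cases hij : i = j
          · subst hij; simp [hz'', hz']
          · simp [hz'', hz', Function.update_of_ne hij, hij]
        set t := (z j + x j) / (2 * x j) with ht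
        have ht0 : 0 ≤ t := by
          apply div_nonneg
          · linarith [hz0 j]
          · linarith
        have ht1 : t ≤ 1 := by
          rw [ht, div_le_one (by linarith)]
          linarith [hzx j]
        have := hK hz'K hz''K ht0 (show (0:ℝ) ≤ 1 - t by linarith) (by ring)
        convert this using 1
        funext i
        by_cases hij : i = j
        · subst hij
          simp only [Pi.add_apply, Pi.smul_apply, smul_eq_mul, hz', hz'',
            Function.update_self, ht]
          field_simp
          ring
        · simp only [Pi.add_apply, Pi.smul_apply, smul_eq_mul, hz', hz'',
            Function.update_of_ne hij]
          ring
  classical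
  exact aux Finset.univ z hz0 hzx (fun i hi => absurd (Finset.mem_univ i) hi)

/-- For unconditional convex sets `K, T ⊆ ℝ^d` and the positive orthant `Q`:
if `x ∈ K ∩ Q` and `y ∈ T ∩ Q` then `x ∧ y ∈ K ∩ T ∩ Q` and `x ∨ y ∈ (K+T) ∩ Q`. -/
theorem stmt8 (d : ℕ) (K T : Set (Fin d → ℝ)) (hK : Convex ℝ K) (hT : Convex ℝ T)
    (hKu : Unconditional d K) (hTu : Unconditional d T)
    (x y : Fin d → ℝ)
    (hx : x ∈ K ∩ {v | ∀ i, 0 ≤ v i}) (hy : y ∈ T ∩ {v | ∀ i, 0 ≤ v i}) :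
    x ⊓ y ∈ K ∩ T ∩ {v | ∀ i, 0 ≤ v i} ∧ x ⊔ y ∈ (K + T) ∩ {v | ∀ i, 0 ≤ v i} := by
  obtain ⟨hxK, hx0⟩ := hx
  obtain ⟨hyT, hy0⟩ := hy
  have hmin0 : ∀ i, 0 ≤ (x ⊓ y) i := fun i => le_min (hx0 i) (hy0 i)
  constructor
  · refine ⟨⟨?_, ?_⟩, hmin0⟩
    · exact squeeze_mem d K hK hKu x hxK _ hmin0 (fun i => min_le_left _ _)
    · exact squeeze_mem d T hT hTu y hyT _ hmin0 (fun i => min_le_right _ _)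
  · set a : Fin d → ℝ := fun i => if y i ≤ x i then x i else 0 with ha
    set b : Fin d → ℝ := fun i => if y i ≤ x i then 0 else y i with hb
    have haK : a ∈ K := by
      apply squeeze_mem d K hK hKu x hxK
      · intro i; by_cases h : y i ≤ x i <;> simp [ha, h, hx0 i]
      · intro i; by_cases h : y i ≤ x i <;> simp [ha, h, hx0 i]
    have hbT : b ∈ T := by
      apply squeeze_mem d T hT hTu y hyT
      · intro i; by_cases h : y i ≤ x i <;> simp [hb, h, hy0 i]
      · intro i; by_cases h : y i ≤ x i <;> simp [hb, h, hy0 i]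
    constructor
    · rw [show x ⊔ y = a + b from ?_]
      · exact Set.add_mem_add haK hbT
      · funext i
        by_cases h : y i ≤ x i
        · simp [ha, hb, h, Pi.sup_apply, sup_eq_left.mpr h]
        · simp [ha, hb, h, Pi.sup_apply, sup_eq_right.mpr (le_of_not_ge h)]
    · exact fun i => le_trans (hx0 i) (le_max_left _ _)
end

section
/- There exist origin-symmetric convex bodies K, T ⊆ ℝ² for which γ_2(conv(K ∪ T))·γ_2(K ∩ T) < γ_2(K)·γ_2(T). Concretely, for N ≥ 3, K = [-1/N, 1/N] × [-N, N] and T = [-N, N] × [-1/N, 1/N] provide such an example. -/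
open MeasureTheory ProbabilityTheory
open scoped ENNReal

/-!
For `0 < a < b` put `K = [-a, a] × [-b, b]` and `T = [-b, b] × [-a, a]`. Then `K ∩ T = [-a, a]²`,
and since `γ₂` is a product measure, `γ₂(K) γ₂(T) = γ₂(K ∩ T) γ₂([-b, b]²)`. The convex hull of
`K ∪ T` stays in the big square `[-b, b]²` below the line `x₀ + x₁ = a + b`, which cuts off an open
corner of that square; as `γ₂` charges every nonempty open set, `γ₂(conv(K ∪ T)) < γ₂([-b, b]²)`.
-/

noncomputable def stdGaussian2 : Measure (Fin 2 → ℝ) :=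
  Measure.pi fun _ => gaussianReal 0 1

lemma isOpenPosMeasure_gaussianReal (μ : ℝ) {v : NNReal} (hv : v ≠ 0) :
    Measure.IsOpenPosMeasure (gaussianReal μ v) :=
  (gaussianReal_absolutelyContinuous' μ hv).isOpenPosMeasure

instance : Measure.IsOpenPosMeasure stdGaussian2 :=
  haveI := isOpenPosMeasure_gaussianReal 0 one_ne_zero
  Measure.pi.isOpenPosMeasure _

instance : IsProbabilityMeasure stdGaussian2 := by
  unfold stdGaussian2
  infer_instance

lemma measure_lt_measure_of_isOpen_subset_diff {X : Type*} [TopologicalSpace X]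
    [MeasurableSpace X] [OpensMeasurableSpace X] {μ : Measure X} [μ.IsOpenPosMeasure]
    {s t U : Set X} (hs : μ s ≠ ∞) (hst : s ⊆ t) (hU : IsOpen U) (hU₀ : U.Nonempty)
    (hUt : U ⊆ t \ s) : μ s < μ t :=
  calc μ s < μ s + μ U := ENNReal.lt_add_right hs (hU.measure_ne_zero μ hU₀)
    _ = μ (s ∪ U) :=
      (measure_union (Set.disjoint_of_subset_right hUt Set.disjoint_sdiff_right)
        hU.measurableSet).symm
    _ ≤ μ t := measure_mono (Set.union_subset hst fun _ hx => (hUt hx).1)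

def rect (a b : ℝ) : Set (Fin 2 → ℝ) := {x | |x 0| ≤ a ∧ |x 1| ≤ b}

section rect

variable {a b : ℝ}

lemma rect_eq_pi (a b : ℝ) :
    rect a b = Set.univ.pi fun i => Set.Icc (-![a, b] i) (![a, b] i) := by
  ext x
  simp only [rect, Set.mem_ofPred_eq, Set.mem_univ_pi, Fin.forall_fin_two, Set.mem_Icc, abs_le,
    Matrix.cons_val_zero, Matrix.cons_val_one]

lemma rect_inter_rect (a b c d : ℝ) : rect a b ∩ rect c d = rect (min a c) (min b d) := by
  ext x
  simp only [rect, Set.mem_inter_iff, Set.mem_ofPred_eq, le_min_iff]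
  tauto

lemma neg_rect (a b : ℝ) : -rect a b = rect a b := by
  ext x
  simp [rect]

lemma convex_rect (a b : ℝ) : Convex ℝ (rect a b) := by
  rw [rect_eq_pi]
  exact convex_pi fun i _ => convex_Icc _ _

lemma isCompact_rect (a b : ℝ) : IsCompact (rect a b) := by
  rw [rect_eq_pi]
  exact isCompact_univ_pi fun i => isCompact_Icc

lemma zero_mem_interior_rect (ha : 0 < a) (hb : 0 < b) :
    (0 : Fin 2 → ℝ) ∈ interior (rect a b) := by
  rw [rect_eq_pi, interior_pi_set Set.finite_univ]
  intro i _
  fin_cases i <;> simp [ha, hb]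

lemma stdGaussian2_rect (a b : ℝ) : stdGaussian2 (rect a b) =
    gaussianReal 0 1 (Set.Icc (-a) a) * gaussianReal 0 1 (Set.Icc (-b) b) := by
  rw [rect_eq_pi, stdGaussian2, Measure.pi_pi, Fin.prod_univ_two]
  rfl

lemma convexHull_rect_union_rect_subset (hab : a ≤ b) :
    convexHull ℝ (rect a b ∪ rect b a) ⊆ rect b b ∩ {x | x 0 + x 1 ≤ a + b} := by
  have hlin : IsLinearMap ℝ fun x : Fin 2 → ℝ => x 0 + x 1 :=
    ⟨fun x y => by simp only [Pi.add_apply]; ring,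
      fun c x => by simp only [Pi.smul_apply, smul_eq_mul]; ring⟩
  refine convexHull_min ?_ ((convex_rect b b).inter (convex_halfSpace_le hlin _))
  rintro x (⟨h0, h1⟩ | ⟨h0, h1⟩) <;>
    have := abs_le.1 h0 <;> have := abs_le.1 h1 <;>
    exact ⟨⟨by linarith, by linarith⟩, by simp only [Set.mem_ofPred_eq]; linarith⟩

lemma stdGaussian2_rect_inter_halfSpace_lt (ha : 0 ≤ a) (hab : a < b) :
    stdGaussian2 (rect b b ∩ {x | x 0 + x 1 ≤ a + b}) < stdGaussian2 (rect b b) := by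
  have hcorner : (Set.univ.pi fun _ => Set.Ioo ((a + b) / 2) b) ⊆
      rect b b \ {x | x 0 + x 1 ≤ a + b} := by
    intro x hx
    obtain ⟨h00, h01⟩ := hx 0 (Set.mem_univ _)
    obtain ⟨h10, h11⟩ := hx 1 (Set.mem_univ _)
    refine ⟨⟨abs_le.2 ⟨by linarith, h01.le⟩, abs_le.2 ⟨by linarith, h11.le⟩⟩, ?_⟩
    simp only [Set.mem_ofPred_eq, not_le]
    linarith
  exact measure_lt_measure_of_isOpen_subset_diff (measure_ne_top _ _) Set.inter_subset_left
    (isOpen_set_pi Set.finite_univ fun _ _ => isOpen_Ioo)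
    (Set.univ_pi_nonempty_iff.2 fun _ => Set.nonempty_Ioo.2 (by linarith))
    (hcorner.trans (Set.sdiff_subset_sdiff_right Set.inter_subset_right))

theorem stdGaussian2_convexHull_rect_union_mul_inter_lt (ha : 0 < a) (hab : a < b) :
    stdGaussian2 (convexHull ℝ (rect a b ∪ rect b a)) * stdGaussian2 (rect a b ∩ rect b a) <
      stdGaussian2 (rect a b) * stdGaussian2 (rect b a) := by
  have hinter : rect a b ∩ rect b a = rect a a := by
    rw [rect_inter_rect, min_eq_left hab.le, min_eq_right hab.le]
  have hsmall : stdGaussian2 (rect a a) ≠ 0 :=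
    (Measure.measure_pos_of_nonempty_interior _ ⟨0, zero_mem_interior_rect ha ha⟩).ne'
  rw [hinter]
  calc stdGaussian2 (convexHull ℝ (rect a b ∪ rect b a)) * stdGaussian2 (rect a a)
      ≤ stdGaussian2 (rect b b ∩ {x | x 0 + x 1 ≤ a + b}) * stdGaussian2 (rect a a) := by
        gcongr
        exact convexHull_rect_union_rect_subset hab.le
    _ < stdGaussian2 (rect b b) * stdGaussian2 (rect a a) :=
        ENNReal.mul_lt_mul_left hsmall (measure_ne_top _ _)
          (stdGaussian2_rect_inter_halfSpace_lt ha.le hab)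
    _ = stdGaussian2 (rect a b) * stdGaussian2 (rect b a) := by
        simp only [stdGaussian2_rect]
        ring

end rect

/-- There exist origin-symmetric convex bodies `K, T ⊆ ℝ²` with
`γ₂(conv(K ∪ T))·γ₂(K ∩ T) < γ₂(K)·γ₂(T)`; concretely, for any `N ≥ 3`,
`K = [-1/N, 1/N] × [-N, N]` and `T = [-N, N] × [-1/N, 1/N]` work. -/
theorem stmt14 :
    (∀ N : ℝ, 3 ≤ N →
      stdGaussian2 (convexHull ℝ
            ({x | |x 0| ≤ 1 / N ∧ |x 1| ≤ N} ∪ {x | |x 0| ≤ N ∧ |x 1| ≤ 1 / N})) *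
          stdGaussian2 ({x | |x 0| ≤ 1 / N ∧ |x 1| ≤ N} ∩ {x | |x 0| ≤ N ∧ |x 1| ≤ 1 / N}) <
        stdGaussian2 {x | |x 0| ≤ 1 / N ∧ |x 1| ≤ N} *
          stdGaussian2 {x | |x 0| ≤ N ∧ |x 1| ≤ 1 / N}) ∧
      ∃ K T : Set (Fin 2 → ℝ),
        Convex ℝ K ∧ K = -K ∧ IsCompact K ∧ (interior K).Nonempty ∧
        Convex ℝ T ∧ T = -T ∧ IsCompact T ∧ (interior T).Nonempty ∧
        stdGaussian2 (convexHull ℝ (K ∪ T)) * stdGaussian2 (K ∩ T) <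
          stdGaussian2 K * stdGaussian2 T := by
  have hlt : ∀ N : ℝ, 3 ≤ N → 1 / N < N := fun N hN => by
    rw [div_lt_iff₀ (by positivity)]
    nlinarith
  have h3 : (0 : ℝ) < 1 / 3 := by norm_num
  refine ⟨fun N hN => stdGaussian2_convexHull_rect_union_mul_inter_lt (by positivity) (hlt N hN),
    rect (1 / 3) 3, rect 3 (1 / 3),
    convex_rect _ _, (neg_rect _ _).symm, isCompact_rect _ _,
    ⟨0, zero_mem_interior_rect h3 three_pos⟩,
    convex_rect _ _, (neg_rect _ _).symm, isCompact_rect _ _,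
    ⟨0, zero_mem_interior_rect three_pos h3⟩,
    stdGaussian2_convexHull_rect_union_mul_inter_lt h3 (hlt 3 le_rfl)⟩
end
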